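/- arXiv:1911.09954 — 4 statements merged into one kernel-verified Lean document; each statement's English description precedes it below -/
import Mathlib

section
/- Let (X, M, μ) be a measure space equipped with a ball-basis B. If μ(X) < ∞, then X itself is a ball, i.e. X ∈ B (in fact X = B* for some ball B). -/
open MeasureTheory ENNReal Set Filter

noncomputable section

/-- A ball-basis on a measure space, with hull constant `K` (conditions B1–B4). -/
structure BallBasis (X : Type*) [MeasurableSpace X] (μ : Measure X) where
  balls : Set (Set X)
  K : ℝ≥0∞
  K_pos : 0 < K
  K_lt_top : K < ∞
  meas : ∀ B ∈ balls, MeasurableSet B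
  pos : ∀ B ∈ balls, 0 < μ B
  lt_top : ∀ B ∈ balls, μ B < ∞
  pair : ∀ x y : X, ∃ B ∈ balls, x ∈ B ∧ y ∈ B
  approx : ∀ E : Set X, MeasurableSet E → ∀ ε : ℝ≥0∞, 0 < ε →
    ∃ Bs : ℕ → Set X, (∀ k, Bs k ∈ balls) ∧ μ (symmDiff E (⋃ k, Bs k)) < ε
  hull : Set X → Set X
  hull_mem : ∀ B ∈ balls, hull B ∈ balls
  hull_sub : ∀ B ∈ balls, ∀ A ∈ balls, μ A ≤ 2 * μ B → (A ∩ B).Nonempty → A ⊆ hull B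
  hull_bound : ∀ B ∈ balls, μ (hull B) ≤ K * μ B

/-- The doubling property of a ball-basis, with doubling constant `η > 2`. -/
def BallBasis.Doubling {X : Type*} [MeasurableSpace X] {μ : Measure X}
    (𝓑 : BallBasis X μ) (η : ℝ≥0∞) : Prop :=
  2 < η ∧ ∀ A ∈ 𝓑.balls, μ A < μ (univ : Set X) / 2 →
    ∃ B ∈ 𝓑.balls, A ⊆ B ∧ 2 * μ A ≤ μ B ∧ μ B ≤ η * μ A

variable {X : Type*} [MeasurableSpace X]

/-- Oscillation `OSC_E(f) = sup_{x,x' ∈ E} |f x − f x'|` of a real function, valued in `ℝ≥0∞`. -/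
def osc (f : X → ℝ) (E : Set X) : ℝ≥0∞ :=
  ⨆ x ∈ E, ⨆ y ∈ E, ENNReal.ofReal (f x - f y)

/-- Oscillation of an `ℝ≥0∞`-valued function. -/
def eosc (F : X → ℝ≥0∞) (E : Set X) : ℝ≥0∞ :=
  ⨆ x ∈ E, ⨆ y ∈ E, (F x - F y)

/-- `OSC_{B,α}(f)`: the infimum of `OSC_E(f)` over measurable `E ⊆ B` with `μ(E) ≥ α μ(B)`. -/
def OSCa (μ : Measure X) (f : X → ℝ) (B : Set X) (α : ℝ) : ℝ≥0∞ :=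
  ⨅ (E : Set X) (_ : MeasurableSet E) (_ : E ⊆ B)
    (_ : ENNReal.ofReal α * μ B ≤ μ E), osc f E

/-- `OSC_{B,α}` for `ℝ≥0∞`-valued functions. -/
def eOSCa (μ : Measure X) (F : X → ℝ≥0∞) (B : Set X) (α : ℝ) : ℝ≥0∞ :=
  ⨅ (E : Set X) (_ : MeasurableSet E) (_ : E ⊆ B)
    (_ : ENNReal.ofReal α * μ B ≤ μ E), eosc F E

/-- `INF_{B,α}(g)`: the infimum of `‖g‖_{L^∞(E)}` over measurable `E ⊆ B` with `μ(E) ≥ α μ(B)`. -/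
def INFa (μ : Measure X) (g : X → ℝ) (B : Set X) (α : ℝ) : ℝ≥0∞ :=
  ⨅ (E : Set X) (_ : MeasurableSet E) (_ : E ⊆ B)
    (_ : ENNReal.ofReal α * μ B ≤ μ E),
      essSup (fun x => ENNReal.ofReal |g x|) (μ.restrict E)

/-- `INF_B(g) = essinf_{y ∈ B} |g y|`. -/
def eINF (μ : Measure X) (g : X → ℝ) (B : Set X) : ℝ≥0∞ :=
  essInf (fun x => ENNReal.ofReal |g x|) (μ.restrict B)

/-- A density point of a set `F` with respect to a ball-basis. -/
def IsDensityPoint (μ : Measure X) (𝓑 : BallBasis X μ) (F : Set X) (x : X) : Prop :=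
  x ∈ F ∧ ∀ γ : ℝ, 0 < γ → γ < 1 →
    ∃ B ∈ 𝓑.balls, x ∈ B ∧ ENNReal.ofReal γ * μ B < μ (B ∩ F)

/-- A median of `f` over `B`. -/
def IsMedian (μ : Measure X) (f : X → ℝ) (B : Set X) (m : ℝ) : Prop :=
  μ {x ∈ B | m < f x} ≤ μ B / 2 ∧ μ {x ∈ B | f x < m} ≤ μ B / 2

/-- A median of an `ℝ≥0∞`-valued function over `B`. -/
def IsMedianE (μ : Measure X) (F : X → ℝ≥0∞) (B : Set X) (m : ℝ≥0∞) : Prop :=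
  μ {x ∈ B | m < F x} ≤ μ B / 2 ∧ μ {x ∈ B | F x < m} ≤ μ B / 2

/-- `⟨f⟩_B = (μ(B)⁻¹ ∫_B |f|^r)^{1/r}`. -/
def avgPow (μ : Measure X) (f : X → ℝ) (B : Set X) (r : ℝ) : ℝ≥0∞ :=
  ((μ B)⁻¹ * ∫⁻ x in B, (ENNReal.ofReal |f x|) ^ r ∂μ) ^ (1 / r)

/-- `f_B = μ(B)⁻¹ ∫_B f`. -/
def intAvg (μ : Measure X) (f : X → ℝ) (B : Set X) : ℝ :=
  (∫ x in B, f x ∂μ) / (μ B).toReal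

/-- `⟨f⟩_{#,B} = (μ(B)⁻¹ ∫_B |f − f_B|^r)^{1/r}`. -/
def sharpAvg (μ : Measure X) (f : X → ℝ) (B : Set X) (r : ℝ) : ℝ≥0∞ :=
  ((μ B)⁻¹ * ∫⁻ x in B, (ENNReal.ofReal |f x - intAvg μ f B|) ^ r ∂μ) ^ (1 / r)

/-- `⟨f⟩*_B = sup_{A ∈ 𝓑, A ⊇ B} ⟨f⟩_A`. -/
def starAvg (μ : Measure X) (𝓑 : BallBasis X μ) (f : X → ℝ) (B : Set X) (r : ℝ) : ℝ≥0∞ :=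
  ⨆ (A : Set X) (_ : A ∈ 𝓑.balls) (_ : B ⊆ A), avgPow μ f A r

/-- `⟨f⟩*_{#,B} = sup_{A ∈ 𝓑, A ⊇ B} ⟨f⟩_{#,A}`. -/
def starSharp (μ : Measure X) (𝓑 : BallBasis X μ) (f : X → ℝ) (B : Set X) (r : ℝ) : ℝ≥0∞ :=
  ⨆ (A : Set X) (_ : A ∈ 𝓑.balls) (_ : B ⊆ A), sharpAvg μ f A r

/-- The maximal function `M f(x) = sup_{B ∋ x} ⟨f⟩_B`. -/
def Mmax (μ : Measure X) (𝓑 : BallBasis X μ) (f : X → ℝ) (r : ℝ) (x : X) : ℝ≥0∞ :=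
  ⨆ (B : Set X) (_ : B ∈ 𝓑.balls) (_ : x ∈ B), avgPow μ f B r

/-- The sharp maximal function `M_# f(x) = sup_{B ∋ x} ⟨f⟩_{#,B}`. -/
def Msharp (μ : Measure X) (𝓑 : BallBasis X μ) (f : X → ℝ) (r : ℝ) (x : X) : ℝ≥0∞ :=
  ⨆ (B : Set X) (_ : B ∈ 𝓑.balls) (_ : x ∈ B), sharpAvg μ f B r

/-- The local sharp maximal function of Jawerth–Torchinsky,
`M_{#,α} f(x) = sup_{B ∋ x} OSC_{B,α}(f)`. -/
def Mla (μ : Measure X) (𝓑 : BallBasis X μ) (f : X → ℝ) (α : ℝ) (x : X) : ℝ≥0∞ :=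
  ⨆ (B : Set X) (_ : B ∈ 𝓑.balls) (_ : x ∈ B), OSCa μ f B α

/-- `|a − b|` in `ℝ≥0∞`. -/
def ediff (a b : ℝ≥0∞) : ℝ≥0∞ := (a - b) ⊔ (b - a)

/-- A subadditive operator. -/
def SubadditiveOp (T : (X → ℝ) → (X → ℝ)) : Prop :=
  (∀ (c : ℝ) (f : X → ℝ) (x : X), |T (c • f) x| = |c| * |T f x|) ∧
  (∀ (f g : X → ℝ) (x : X), |T (f + g) x| ≤ |T f x| + |T g x|)

/-- The localization property of a bounded oscillation (BO) operator, with constant `L`: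
`OSC_B (T (f · 1_{X ∖ B*})) ≤ L ⟨f⟩*_B` for all `f ∈ L^r` and balls `B`. -/
def HasBOconst (μ : Measure X) (𝓑 : BallBasis X μ) (r : ℝ)
    (T : (X → ℝ) → (X → ℝ)) (L : ℝ≥0∞) : Prop :=
  ∀ f : X → ℝ, MemLp f (ENNReal.ofReal r) μ → ∀ B ∈ 𝓑.balls,
    osc (T ((𝓑.hull B)ᶜ.indicator f)) B ≤ L * starAvg μ 𝓑 f B r

/-- The weak-`L^r` inequality for `T`, with norm `N`. -/
def WeakType (μ : Measure X) (r : ℝ) (T : (X → ℝ) → (X → ℝ)) (N : ℝ≥0∞) : Prop :=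
  ∀ f : X → ℝ, MemLp f (ENNReal.ofReal r) μ → ∀ lam : ℝ, 0 < lam →
    μ {x | lam < |T f x|} ≤ (N / ENNReal.ofReal lam) ^ r *
      ∫⁻ x, (ENNReal.ofReal |f x|) ^ r ∂μ
/-!
The ball measures are bounded by `μ(X) < ∞`, so some ball `B` has more than half of their
supremum, and then every ball `A` satisfies `μ(A) ≤ 2μ(B)`. By (B2) each point lies in a common
ball with a point of `B`, so (B4) puts every point in `B*`.
-/

namespace BallBasis

variable {μ : Measure X} (𝓑 : BallBasis X μ)

theorem balls_nonempty : 𝓑.balls.Nonempty := by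
  obtain ⟨Bs, hBs, -⟩ := 𝓑.approx ∅ MeasurableSet.empty 1 one_pos
  exact ⟨Bs 0, hBs 0⟩

theorem hull_eq_univ_of_forall_le_two_mul {B : Set X} (hB : B ∈ 𝓑.balls)
    (hmax : ∀ A ∈ 𝓑.balls, μ A ≤ 2 * μ B) : 𝓑.hull B = univ := by
  refine eq_univ_of_forall fun y => ?_
  obtain ⟨x, hx⟩ : B.Nonempty := nonempty_of_measure_ne_zero (𝓑.pos B hB).ne'
  obtain ⟨A, hA, hxA, hyA⟩ := 𝓑.pair x y
  exact 𝓑.hull_sub B hB A hA (hmax A hA) ⟨x, hxA, hx⟩ hyA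

theorem exists_forall_le_two_mul_of_iSup_lt_top (hsup : ⨆ A ∈ 𝓑.balls, μ A < ∞) :
    ∃ B ∈ 𝓑.balls, ∀ A ∈ 𝓑.balls, μ A ≤ 2 * μ B := by
  set s := ⨆ A ∈ 𝓑.balls, μ A
  have hle : ∀ A ∈ 𝓑.balls, μ A ≤ s := fun A hA => le_iSup₂ (f := fun A _ => μ A) A hA
  have hs_pos : 0 < s := by
    obtain ⟨A, hA⟩ := 𝓑.balls_nonempty
    exact (𝓑.pos A hA).trans_le (hle A hA)
  obtain ⟨B, hB, hBs⟩ : ∃ B ∈ 𝓑.balls, s / 2 < μ B :=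
    lt_biSup_iff.1 (ENNReal.half_lt_self hs_pos.ne' hsup.ne)
  refine ⟨B, hB, fun A hA => ?_⟩
  calc μ A ≤ s := hle A hA
    _ = 2 * (s / 2) := (ENNReal.mul_div_cancel two_ne_zero ofNat_ne_top).symm
    _ ≤ 2 * μ B := by gcongr

end BallBasis

/-- if `μ(X) < ∞`, then `X` itself is a ball; in fact `X = B*` for some ball. -/
theorem univ_mem_balls_of_finite_measure
    {X : Type*} [MeasurableSpace X] (μ : Measure X) (𝓑 : BallBasis X μ)
    (hX : μ (univ : Set X) < ∞) :
    (univ : Set X) ∈ 𝓑.balls ∧ ∃ B ∈ 𝓑.balls, 𝓑.hull B = univ := by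
  have hsup : ⨆ A ∈ 𝓑.balls, μ A < ∞ :=
    (iSup₂_le fun A _ => measure_mono (subset_univ A)).trans_lt hX
  obtain ⟨B, hB, hmax⟩ := 𝓑.exists_forall_le_two_mul_of_iSup_lt_top hsup
  have huniv := 𝓑.hull_eq_univ_of_forall_le_two_mul hB hmax
  exact ⟨huniv ▸ 𝓑.hull_mem B hB, B, hB, huniv⟩
end
end

section
/- Let B be a doubling ball-basis in a measure space (X, M, μ) with hull constant K and doubling constant η. If F ⊆ X is measurable with μ(F) < μ(X)/4, then for every density point x of F there exists a ball B ∋ x such that (2ηK)⁻¹ μ(B*) ≤ μ(B* ∩ F) ≤ μ(B*)/2 and (2η)⁻¹ μ(B) ≤ μ(B ∩ F) ≤ μ(B)/2. -/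
/-!
Call a ball heavy if `F` occupies more than half of it. Since `x` is a density point, some heavy
ball `C` contains `x`; a heavy ball has measure `< 2 μ(F) < μ(X)/2`, so it has a doubling ball
`D ⊇ C` with `2 μ(C) ≤ μ(D) ≤ η μ(C)`. If `D` or its hull `D*` is heavy, it is a heavy ball around
`x` of at least twice the measure of `C`; as heavy balls have bounded measure, this cannot go on
forever. Otherwise `D` is well balanced: `μ(D ∩ F) ≥ μ(C ∩ F) > μ(C)/2 ≥ μ(D)/(2η)`, and
`μ(D*) ≤ K μ(D)` gives the bound for `D*`.
-/

open MeasureTheory ENNReal Set Filter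

noncomputable section

variable {X : Type*} [MeasurableSpace X]

lemma ENNReal.inv_mul_mul_le_inv_mul {b c u v : ℝ≥0∞} (hb : b ≠ 0) (h : u ≤ c * v) :
    (b * c)⁻¹ * u ≤ b⁻¹ * v := by
  rcases eq_or_ne c ∞ with rfl | hc
  · simp [ENNReal.mul_top hb]
  rcases eq_or_ne c 0 with rfl | hc0
  · simp [nonpos_iff_eq_zero.1 (h.trans_eq (zero_mul v))]
  calc (b * c)⁻¹ * u ≤ (b * c)⁻¹ * (c * v) := by gcongr
    _ = b⁻¹ * v := by
      rw [ENNReal.mul_inv (Or.inl hb) (Or.inr hc0), mul_assoc, ← mul_assoc c⁻¹,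
        ENNReal.inv_mul_cancel hc0 hc, one_mul]

lemma ENNReal.exists_forall_not_two_mul_le {α : Type*} {p : α → Prop} (f : α → ℝ≥0∞)
    {M : ℝ≥0∞} (hM : M ≠ ∞) (hf : ∀ a, p a → f a ≤ M) {a₀ : α} (ha₀ : p a₀) (h0 : f a₀ ≠ 0) :
    ∃ a, p a ∧ ∀ b, p b → ¬ 2 * f a ≤ f b := by
  by_contra! hgrow
  have hpow : ∀ n : ℕ, ∃ a, p a ∧ 2 ^ n * f a₀ ≤ f a := by
    intro n
    induction n with
    | zero => exact ⟨a₀, ha₀, by simp⟩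
    | succ n ih =>
      obtain ⟨a, ha, hle⟩ := ih
      obtain ⟨b, hb, hab⟩ := hgrow a ha
      exact ⟨b, hb, by rw [pow_succ', mul_assoc]; exact (mul_le_mul_right hle 2).trans hab⟩
  have htend : Tendsto (fun n : ℕ ↦ 2 ^ n * f a₀) atTop (nhds ∞) := by
    simpa [ENNReal.top_mul h0] using ENNReal.Tendsto.mul_const (b := f a₀)
      (ENNReal.tendsto_pow_atTop_nhds_top_iff.2 one_lt_two) (Or.inl top_ne_zero)
  obtain ⟨n, hn⟩ := (htend.eventually (lt_mem_nhds hM.lt_top)).exists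
  obtain ⟨a, ha, hle⟩ := hpow n
  exact (hn.trans_le (hle.trans (hf a ha))).false

lemma MeasureTheory.measure_lt_two_mul_of_half_lt {μ : Measure X} {B F : Set X}
    (h : μ B / 2 < μ (B ∩ F)) : μ B < 2 * μ F := by
  rw [mul_comm, ← ENNReal.div_lt_iff (Or.inl two_ne_zero) (Or.inl ofNat_ne_top)]
  exact h.trans_le (measure_mono inter_subset_right)

lemma ENNReal.two_mul_div_four (a : ℝ≥0∞) : 2 * (a / 4) = a / 2 := by
  rw [← mul_div_assoc, show (4 : ℝ≥0∞) = 2 * 2 by norm_num,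
    ENNReal.mul_div_mul_left _ _ two_ne_zero ofNat_ne_top]

namespace BallBasis

variable {μ : Measure X} (𝓑 : BallBasis X μ)

lemma subset_hull {B : Set X} (hB : B ∈ 𝓑.balls) : B ⊆ 𝓑.hull B :=
  𝓑.hull_sub B hB B hB (le_mul_of_one_le_left zero_le one_le_two)
    (by rw [inter_self]; exact nonempty_of_measure_ne_zero (𝓑.pos B hB).ne')

def IsWellBalanced (η : ℝ≥0∞) (F B : Set X) : Prop :=
  (2 * η * 𝓑.K)⁻¹ * μ (𝓑.hull B) ≤ μ (𝓑.hull B ∩ F) ∧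
  μ (𝓑.hull B ∩ F) ≤ μ (𝓑.hull B) / 2 ∧
  (2 * η)⁻¹ * μ B ≤ μ (B ∩ F) ∧
  μ (B ∩ F) ≤ μ B / 2

variable {𝓑}

lemma exists_isWellBalanced_or_exists_two_mul_le {η : ℝ≥0∞} (hd : 𝓑.Doubling η)
    {F C : Set X} (hC : C ∈ 𝓑.balls) (hCsmall : μ C < μ univ / 2)
    (hCF : μ C / 2 < μ (C ∩ F)) :
    (∃ B ∈ 𝓑.balls, C ⊆ B ∧ 𝓑.IsWellBalanced η F B) ∨
      ∃ C' ∈ 𝓑.balls, C ⊆ C' ∧ μ C' / 2 < μ (C' ∩ F) ∧ 2 * μ C ≤ μ C' := by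
  obtain ⟨D, hD, hCD, hD2, hDη⟩ := hd.2 C hC hCsmall
  have hDhull := 𝓑.subset_hull hD
  by_cases hDF : μ D / 2 < μ (D ∩ F)
  · exact .inr ⟨D, hD, hCD, hDF, hD2⟩
  by_cases hhullF : μ (𝓑.hull D) / 2 < μ (𝓑.hull D ∩ F)
  · exact .inr ⟨_, 𝓑.hull_mem D hD, hCD.trans hDhull, hhullF, hD2.trans (measure_mono hDhull)⟩
  have hDlow : (2 * η)⁻¹ * μ D ≤ μ (D ∩ F) :=
    calc (2 * η)⁻¹ * μ D ≤ 2⁻¹ * μ C := ENNReal.inv_mul_mul_le_inv_mul two_ne_zero hDη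
      _ ≤ μ (C ∩ F) := by rw [← ENNReal.div_eq_inv_mul]; exact hCF.le
      _ ≤ μ (D ∩ F) := measure_mono (inter_subset_inter_left F hCD)
  have hη : 2 * η ≠ 0 := mul_ne_zero two_ne_zero (zero_lt_two.trans hd.1).ne'
  refine .inl ⟨D, hD, hCD, ?_, not_lt.1 hhullF, hDlow, not_lt.1 hDF⟩
  calc (2 * η * 𝓑.K)⁻¹ * μ (𝓑.hull D) ≤ (2 * η)⁻¹ * μ D :=
        ENNReal.inv_mul_mul_le_inv_mul hη (𝓑.hull_bound D hD)
    _ ≤ μ (D ∩ F) := hDlow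
    _ ≤ μ (𝓑.hull D ∩ F) := measure_mono (inter_subset_inter_left F hDhull)

end BallBasis

theorem exists_well_balanced_ball_general
    {X : Type*} [MeasurableSpace X] (μ : Measure X) (𝓑 : BallBasis X μ)
    (η : ℝ≥0∞) (hd : 𝓑.Doubling η)
    (F : Set X) (hF : μ F < μ (univ : Set X) / 4)
    (x : X) (hx : IsDensityPoint μ 𝓑 F x) :
    ∃ B ∈ 𝓑.balls, x ∈ B ∧
      (2 * η * 𝓑.K)⁻¹ * μ (𝓑.hull B) ≤ μ (𝓑.hull B ∩ F) ∧
      μ (𝓑.hull B ∩ F) ≤ μ (𝓑.hull B) / 2 ∧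
      (2 * η)⁻¹ * μ B ≤ μ (B ∩ F) ∧
      μ (B ∩ F) ≤ μ B / 2 := by
  obtain ⟨C₀, hC₀, hxC₀, hC₀F⟩ := hx.2 (1 / 2) (by norm_num) (by norm_num)
  rw [one_div, ENNReal.ofReal_inv_of_pos two_pos, ENNReal.ofReal_ofNat,
    ← ENNReal.div_eq_inv_mul] at hC₀F
  have hsmall : 2 * μ F < μ univ / 2 := by
    rw [← ENNReal.two_mul_div_four]
    exact (ENNReal.mul_lt_mul_iff_right two_ne_zero ofNat_ne_top).2 hF
  obtain ⟨C, ⟨hC, hxC, hCF⟩, hmax⟩ := ENNReal.exists_forall_not_two_mul_le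
    (p := fun C ↦ C ∈ 𝓑.balls ∧ x ∈ C ∧ μ C / 2 < μ (C ∩ F)) μ
    (hsmall.trans_le le_top).ne (fun C hC ↦ (measure_lt_two_mul_of_half_lt hC.2.2).le)
    ⟨hC₀, hxC₀, hC₀F⟩ (𝓑.pos C₀ hC₀).ne'
  rcases 𝓑.exists_isWellBalanced_or_exists_two_mul_le hd hC
      ((measure_lt_two_mul_of_half_lt hCF).trans hsmall) hCF with
    ⟨B, hB, hCB, hwb⟩ | ⟨C', hC', hCC', hC'F, hCC'2⟩
  · exact ⟨B, hB, hCB hxC, hwb⟩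
  · exact (hmax C' ⟨hC', hCC' hxC, hC'F⟩ hCC'2).elim

/-- every density point of a set of measure `< μ(X)/4` admits a
well balanced ball. -/
theorem exists_well_balanced_ball
    {X : Type*} [MeasurableSpace X] (μ : Measure X) (𝓑 : BallBasis X μ)
    (η : ℝ≥0∞) (hd : 𝓑.Doubling η)
    (F : Set X) (hFmeas : MeasurableSet F) (hF : μ F < μ (univ : Set X) / 4)
    (x : X) (hx : IsDensityPoint μ 𝓑 F x) :
    ∃ B ∈ 𝓑.balls, x ∈ B ∧
      (2 * η * 𝓑.K)⁻¹ * μ (𝓑.hull B) ≤ μ (𝓑.hull B ∩ F) ∧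
      μ (𝓑.hull B ∩ F) ≤ μ (𝓑.hull B) / 2 ∧
      (2 * η)⁻¹ * μ B ≤ μ (B ∩ F) ∧
      μ (B ∩ F) ≤ μ B / 2 :=
  exists_well_balanced_ball_general μ 𝓑 η hd F hF x hx
end
end

section
/- Let B be a ball-basis in a measure space (X, M, μ) and 1 ≤ r < ∞. For any ball B ∈ B and f ∈ L^r(X), ⟨f⟩*_{#,B} ≤ essinf_{y∈B} M_# f(y) ≤ C ⟨f⟩*_{#,B}, where C depends only on the hull constant K. -/
open MeasureTheory ENNReal Set Filter

noncomputable section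

variable {X : Type*} [MeasurableSpace X]

/-!
The lower bound is pointwise: every ball containing `B` contains each `y ∈ B`.

For the upper bound let `S = ⟨f⟩*_{#,B}` and `λ = c S + ε` with `c^r ≥ 2^r K + 2^(r+1) K²`.
If a ball `A ∋ y` has `μ B ≤ 2 μ A`, then `B ⊆ A*`, and comparing `f` on `A` with its mean
over `A*` gives `⟨f⟩_{#,A}^r ≤ 2^r K S^r ≤ λ^r`. Otherwise `μ A ≤ 2 μ B`, so `A ⊆ B*` when `A`
meets `B`; by a Vitali covering argument the balls of this kind with `⟨f⟩_{#,A} > λ` cover a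
set of measure at most `2^r K² S^r μ(B) / λ^r ≤ μ(B) / 2`. On the rest of `B`, which has
positive measure, `M_# f ≤ λ`.
-/

lemma essInf_le_of_measure_setOf_le_ne_zero {ν : Measure X} {F : X → ℝ≥0∞} {c : ℝ≥0∞}
    (h : ν {y | F y ≤ c} ≠ 0) : essInf F ν ≤ c := by
  by_contra! hlt
  exact h (measure_mono_null (fun y (hy : F y ≤ c) => (hy.trans_lt hlt).not_ge)
    (ae_iff.mp ae_essInf_le))

lemma MeasureTheory.MemLp.integrableOn_of_measure_ne_top {E : Type*} [NormedAddCommGroup E]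
    {μ : Measure X} {f : X → E} {p : ℝ≥0∞} (hp : 1 ≤ p) (hf : MemLp f p μ) {s : Set X}
    (hs : μ s ≠ ∞) :
    IntegrableOn f s μ :=
  have : IsFiniteMeasure (μ.restrict s) := isFiniteMeasure_restrict.2 hs
  (hf.restrict s).integrable hp

lemma rpow_lintegral_le_lintegral_rpow {ν : Measure X} [IsProbabilityMeasure ν] {u : X → ℝ≥0∞}
    (hu : AEMeasurable u ν) {r : ℝ} (hr : 1 ≤ r) : (∫⁻ x, u x ∂ν) ^ r ≤ ∫⁻ x, u x ^ r ∂ν := by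
  rcases hr.eq_or_lt with rfl | hr1
  · simp
  have hHolder := ENNReal.lintegral_mul_le_Lp_mul_Lq ν (Real.HolderConjugate.conjExponent hr1)
    hu (aemeasurable_const (b := (1 : ℝ≥0∞)))
  simp only [Pi.mul_apply, mul_one, ENNReal.one_rpow, lintegral_const, measure_univ] at hHolder
  calc (∫⁻ x, u x ∂ν) ^ r ≤ ((∫⁻ x, u x ^ r ∂ν) ^ (1 / r)) ^ r := by gcongr
    _ = ∫⁻ x, u x ^ r ∂ν := by
      rw [← ENNReal.rpow_mul, one_div_mul_cancel (by positivity), ENNReal.rpow_one]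

section SharpAverages

variable {μ : Measure X} {f : X → ℝ} {r : ℝ}

lemma sharpAvg_rpow (hr : r ≠ 0) (A : Set X) :
    sharpAvg μ f A r ^ r = (μ A)⁻¹ * ∫⁻ x in A, ENNReal.ofReal |f x - intAvg μ f A| ^ r ∂μ := by
  rw [sharpAvg, ← ENNReal.rpow_mul, one_div_mul_cancel hr, ENNReal.rpow_one]

lemma ofReal_abs_intAvg_sub_le {s : Set X} (h0 : μ s ≠ 0) (hs : μ s ≠ ∞)
    (hf : IntegrableOn f s μ) (c : ℝ) :
    ENNReal.ofReal |intAvg μ f s - c| ≤ (μ s)⁻¹ * ∫⁻ x in s, ENNReal.ofReal |f x - c| ∂μ := by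
  have : IsFiniteMeasure (μ.restrict s) := isFiniteMeasure_restrict.2 hs
  have havg : intAvg μ f s - c = (∫ x in s, (f x - c) ∂μ) / (μ s).toReal := by
    rw [integral_sub hf (integrable_const c), setIntegral_const, smul_eq_mul, intAvg,
      measureReal_def]
    have hT : (μ s).toReal ≠ 0 := (ENNReal.toReal_pos h0 hs).ne'
    field_simp
  rw [havg, abs_div, abs_of_nonneg ENNReal.toReal_nonneg,
    ENNReal.ofReal_div_of_pos (ENNReal.toReal_pos h0 hs), ENNReal.ofReal_toReal hs,
    ENNReal.div_eq_inv_mul]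
  gcongr
  simp_rw [← Real.enorm_eq_ofReal_abs]
  exact enorm_integral_le_lintegral_enorm _

lemma ofReal_abs_intAvg_sub_rpow_le (hr : 1 ≤ r) {s : Set X} (h0 : μ s ≠ 0) (hs : μ s ≠ ∞)
    (hf : IntegrableOn f s μ) (c : ℝ) :
    ENNReal.ofReal |intAvg μ f s - c| ^ r
      ≤ (μ s)⁻¹ * ∫⁻ x in s, ENNReal.ofReal |f x - c| ^ r ∂μ := by
  have : IsFiniteMeasure (μ.restrict s) := isFiniteMeasure_restrict.2 hs
  set ν : Measure X := (μ s)⁻¹ • μ.restrict s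
  have : IsProbabilityMeasure ν := ⟨by simp [ν, ENNReal.inv_mul_cancel h0 hs]⟩
  have hu : AEMeasurable (fun x => ENNReal.ofReal |f x - c|) ν :=
    (hf.sub (integrable_const c)).abs.aemeasurable.ennreal_ofReal.smul_measure _
  calc ENNReal.ofReal |intAvg μ f s - c| ^ r
      ≤ ((μ s)⁻¹ * ∫⁻ x in s, ENNReal.ofReal |f x - c| ∂μ) ^ r := by
        gcongr; exact ofReal_abs_intAvg_sub_le h0 hs hf c
    _ = (∫⁻ x, ENNReal.ofReal |f x - c| ∂ν) ^ r := by rw [lintegral_smul_measure, smul_eq_mul]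
    _ ≤ ∫⁻ x, ENNReal.ofReal |f x - c| ^ r ∂ν := rpow_lintegral_le_lintegral_rpow hu hr
    _ = _ := lintegral_smul_measure _ _

lemma lintegral_abs_sub_intAvg_rpow_le (hr : 1 ≤ r) {s : Set X} (h0 : μ s ≠ 0) (hs : μ s ≠ ∞)
    (hf : IntegrableOn f s μ) (c : ℝ) :
    ∫⁻ x in s, ENNReal.ofReal |f x - intAvg μ f s| ^ r ∂μ
      ≤ 2 ^ r * ∫⁻ x in s, ENNReal.ofReal |f x - c| ^ r ∂μ := by
  have : IsFiniteMeasure (μ.restrict s) := isFiniteMeasure_restrict.2 hs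
  set u : X → ℝ≥0∞ := fun x => ENNReal.ofReal |f x - c| ^ r
  set d := ENNReal.ofReal |intAvg μ f s - c|
  have hu : AEMeasurable u (μ.restrict s) :=
    (hf.sub (integrable_const c)).abs.aemeasurable.ennreal_ofReal.pow_const r
  have hpt (x : X) : ENNReal.ofReal |f x - intAvg μ f s| ^ r ≤ 2 ^ (r - 1) * (u x + d ^ r) :=
    calc _ ≤ (ENNReal.ofReal |f x - c| + d) ^ r := by
          gcongr
          rw [← ENNReal.ofReal_add (abs_nonneg _) (abs_nonneg _), abs_sub_comm (intAvg μ f s) c]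
          exact ENNReal.ofReal_le_ofReal (abs_sub_le _ _ _)
      _ ≤ _ := ENNReal.rpow_add_le_mul_rpow_add_rpow _ _ hr
  have hd : d ^ r * μ s ≤ ∫⁻ x in s, u x ∂μ :=
    calc d ^ r * μ s ≤ ((μ s)⁻¹ * ∫⁻ x in s, u x ∂μ) * μ s := by
          gcongr; exact ofReal_abs_intAvg_sub_rpow_le hr h0 hs hf c
      _ = ∫⁻ x in s, u x ∂μ := by
          rw [mul_comm, ← mul_assoc, ENNReal.mul_inv_cancel h0 hs, one_mul]
  calc ∫⁻ x in s, ENNReal.ofReal |f x - intAvg μ f s| ^ r ∂μ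
      ≤ ∫⁻ x in s, 2 ^ (r - 1) * (u x + d ^ r) ∂μ := lintegral_mono hpt
    _ = 2 ^ (r - 1) * (∫⁻ x in s, u x ∂μ + d ^ r * μ s) := by
        rw [lintegral_const_mul' _ _ (ENNReal.rpow_ne_top_of_nonneg (by linarith) ofNat_ne_top),
          lintegral_add_right _ measurable_const, setLIntegral_const]
    _ ≤ 2 ^ (r - 1) * (∫⁻ x in s, u x ∂μ + ∫⁻ x in s, u x ∂μ) := by gcongr
    _ = 2 ^ r * ∫⁻ x in s, u x ∂μ := by
        rw [← two_mul, ← mul_assoc]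
        congr 1
        conv_rhs => rw [← sub_add_cancel r 1, ENNReal.rpow_add _ _ two_ne_zero ofNat_ne_top,
          ENNReal.rpow_one]

lemma lintegral_abs_sub_intAvg_rpow_eq (hr : r ≠ 0) {s : Set X} (h0 : μ s ≠ 0) (hs : μ s ≠ ∞) :
    ∫⁻ x in s, ENNReal.ofReal |f x - intAvg μ f s| ^ r ∂μ = μ s * sharpAvg μ f s r ^ r := by
  rw [sharpAvg_rpow hr, ← mul_assoc, ENNReal.mul_inv_cancel h0 hs, one_mul]

lemma rpow_mul_measure_le_lintegral (hr : 0 < r) {s : Set X} (hs : μ s ≠ ∞) {lam : ℝ≥0∞}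
    (hlam : lam ≤ sharpAvg μ f s r) :
    lam ^ r * μ s ≤ ∫⁻ x in s, ENNReal.ofReal |f x - intAvg μ f s| ^ r ∂μ := by
  rcases eq_or_ne (μ s) 0 with h0 | h0
  · simp [h0]
  calc lam ^ r * μ s ≤ μ s * sharpAvg μ f s r ^ r := by rw [mul_comm]; gcongr
    _ = _ := (lintegral_abs_sub_intAvg_rpow_eq hr.ne' h0 hs).symm

lemma sharpAvg_rpow_le_of_subset (hr : 1 ≤ r) {A W : Set X} (hAW : A ⊆ W) (hA0 : μ A ≠ 0)
    (hA : μ A ≠ ∞) (hW : μ W ≠ ∞) (hf : IntegrableOn f W μ) :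
    sharpAvg μ f A r ^ r ≤ 2 ^ r * (μ W / μ A) * sharpAvg μ f W r ^ r := by
  have hr0 : r ≠ 0 := by positivity
  have hW0 : μ W ≠ 0 := ne_bot_of_le_ne_bot hA0 (measure_mono hAW)
  calc sharpAvg μ f A r ^ r
      ≤ (μ A)⁻¹ * (2 ^ r * ∫⁻ x in A, ENNReal.ofReal |f x - intAvg μ f W| ^ r ∂μ) := by
        rw [sharpAvg_rpow hr0]
        gcongr
        exact lintegral_abs_sub_intAvg_rpow_le hr hA0 hA (hf.mono_set hAW) _
    _ ≤ (μ A)⁻¹ * (2 ^ r * ∫⁻ x in W, ENNReal.ofReal |f x - intAvg μ f W| ^ r ∂μ) := by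
        gcongr
    _ = 2 ^ r * (μ W / μ A) * sharpAvg μ f W r ^ r := by
        rw [lintegral_abs_sub_intAvg_rpow_eq hr0 hW0 hW, ENNReal.div_eq_inv_mul]
        ring

end SharpAverages

lemma measure_diff_ne_zero_of_two_mul_le {μ : Measure X} {s t : Set X} (hs0 : μ s ≠ 0)
    (hs : μ s ≠ ∞) (h : 2 * μ t ≤ μ s) : μ (s \ t) ≠ 0 := by
  have hlt : μ t < μ s :=
    ((ENNReal.le_div_iff_mul_le (.inl two_ne_zero) (.inl ofNat_ne_top)).2 (by rwa [mul_comm])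
      ).trans_lt (ENNReal.half_lt_self hs0 hs)
  exact ((tsub_pos_of_lt hlt).trans_le le_measure_sdiff).ne'

namespace BallBasis

variable {μ : Measure X} (𝓑 : BallBasis X μ)

lemma countable_of_pairwiseDisjoint {u : Set (Set X)} (hu : u ⊆ 𝓑.balls)
    (hdisj : u.PairwiseDisjoint id) (hfin : μ (⋃₀ u) ≠ ∞) : u.Countable := by
  have hcount := Measure.countable_meas_pos_of_disjoint_of_meas_iUnion_ne_top μ
    (As := fun b : u => (b : Set X)) (fun b => 𝓑.meas b (hu b.2))
    (fun b b' hbb' => hdisj b.2 b'.2 (Subtype.coe_ne_coe.2 hbb'))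
    (by rwa [← sUnion_eq_iUnion])
  rw [show {b : u | 0 < μ b} = univ from eq_univ_of_forall fun b => 𝓑.pos b (hu b.2),
    countable_univ_iff] at hcount
  exact countable_coe_iff.1 hcount

theorem exists_countable_disjoint_measure_sUnion_le {t : Set (Set X)} (ht : t ⊆ 𝓑.balls)
    (hfin : μ (⋃₀ t) ≠ ∞) :
    ∃ u ⊆ t, u.Countable ∧ u.PairwiseDisjoint id ∧ μ (⋃₀ t) ≤ 𝓑.K * ∑' b : u, μ b := by
  have hμt : ∀ A ∈ t, μ A ≠ ∞ := fun A hA =>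
    ne_top_of_le_ne_top hfin (measure_mono (subset_sUnion_of_mem hA))
  obtain ⟨u, hut, hdisj, hcov⟩ := Vitali.exists_disjoint_subfamily_covering_enlargement id t
    (fun A => (μ A).toReal) 2 one_lt_two (fun _ _ => ENNReal.toReal_nonneg) (μ (⋃₀ t)).toReal
    (fun A hA => ENNReal.toReal_mono hfin (measure_mono (subset_sUnion_of_mem hA)))
    (fun A hA => nonempty_of_measure_ne_zero (𝓑.pos A (ht hA)).ne')
  have hu : u.Countable := 𝓑.countable_of_pairwiseDisjoint (hut.trans ht) hdisj
    (ne_top_of_le_ne_top hfin (measure_mono (sUnion_mono hut)))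
  refine ⟨u, hut, hu, hdisj, ?_⟩
  have hcover : ⋃₀ t ⊆ ⋃ b ∈ u, 𝓑.hull b := by
    rintro x ⟨a, hat, hxa⟩
    obtain ⟨b, hbu, hab, hδ⟩ := hcov a hat
    have hμ : μ a ≤ 2 * μ b := by
      rwa [← ENNReal.toReal_le_toReal (hμt a hat)
        (ENNReal.mul_ne_top ofNat_ne_top (hμt b (hut hbu))), ENNReal.toReal_mul,
        ENNReal.toReal_ofNat]
    exact mem_biUnion hbu (𝓑.hull_sub b (ht (hut hbu)) a (ht hat) hμ hab hxa)
  calc μ (⋃₀ t) ≤ ∑' b : u, μ (𝓑.hull b) :=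
        (measure_mono hcover).trans (measure_biUnion_le μ hu _)
    _ ≤ ∑' b : u, 𝓑.K * μ b := ENNReal.tsum_le_tsum fun b => 𝓑.hull_bound b (ht (hut b.2))
    _ = 𝓑.K * ∑' b : u, μ b := ENNReal.tsum_mul_left

def highOscBalls (f : X → ℝ) (r : ℝ) (B : Set X) (lam : ℝ≥0∞) : Set (Set X) :=
  {A | A ∈ 𝓑.balls ∧ (A ∩ B).Nonempty ∧ μ A ≤ 2 * μ B ∧ lam < sharpAvg μ f A r}

end BallBasis

section SharpMaximal

variable {μ : Measure X} (𝓑 : BallBasis X μ) {f : X → ℝ} {r : ℝ}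

lemma sharpAvg_le_starSharp {A B : Set X} (hA : A ∈ 𝓑.balls) (hBA : B ⊆ A) :
    sharpAvg μ f A r ≤ starSharp μ 𝓑 f B r :=
  le_iSup₂_of_le A hA (le_iSup_of_le hBA le_rfl)

lemma sharpAvg_le_Msharp {A : Set X} {y : X} (hA : A ∈ 𝓑.balls) (hy : y ∈ A) :
    sharpAvg μ f A r ≤ Msharp μ 𝓑 f r y :=
  le_iSup₂_of_le A hA (le_iSup_of_le hy le_rfl)

lemma starSharp_le_Msharp {B : Set X} {y : X} (hy : y ∈ B) :
    starSharp μ 𝓑 f B r ≤ Msharp μ 𝓑 f r y :=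
  iSup₂_le fun _ hA => iSup_le fun hBA => sharpAvg_le_Msharp 𝓑 hA (hBA hy)

lemma starSharp_le_essInf_Msharp {B : Set X} (hB : MeasurableSet B) :
    starSharp μ 𝓑 f B r ≤ essInf (fun y => Msharp μ 𝓑 f r y) (μ.restrict B) :=
  le_essInf_of_ae_le _ ((ae_restrict_iff' hB).2 (ae_of_all _ fun _ => starSharp_le_Msharp 𝓑))

lemma rpow_mul_tsum_measure_le (hr : 1 ≤ r) {u : Set (Set X)} (hu : u ⊆ 𝓑.balls)
    (hcount : u.Countable) (hdisj : u.PairwiseDisjoint id) {W : Set X} (huW : ∀ b ∈ u, b ⊆ W)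
    (hf : IntegrableOn f W μ) {lam : ℝ≥0∞} (hlam : ∀ b ∈ u, lam ≤ sharpAvg μ f b r) :
    lam ^ r * ∑' b : u, μ b
      ≤ 2 ^ r * ∫⁻ x in W, ENNReal.ofReal |f x - intAvg μ f W| ^ r ∂μ := by
  calc lam ^ r * ∑' b : u, μ b
      ≤ ∑' b : u, 2 ^ r * ∫⁻ x in b, ENNReal.ofReal |f x - intAvg μ f W| ^ r ∂μ := by
        rw [← ENNReal.tsum_mul_left]
        refine ENNReal.tsum_le_tsum fun b => ?_
        have hb := hu b.2
        exact (rpow_mul_measure_le_lintegral (by positivity) (𝓑.lt_top b hb).ne (hlam b b.2)).trans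
          (lintegral_abs_sub_intAvg_rpow_le hr (𝓑.pos b hb).ne' (𝓑.lt_top b hb).ne
            (hf.mono_set (huW b b.2)) _)
    _ = 2 ^ r * ∫⁻ x in ⋃ b ∈ u, b, ENNReal.ofReal |f x - intAvg μ f W| ^ r ∂μ := by
        rw [ENNReal.tsum_mul_left, lintegral_biUnion hcount (fun b hb => 𝓑.meas b (hu hb)) hdisj]
    _ ≤ 2 ^ r * ∫⁻ x in W, ENNReal.ofReal |f x - intAvg μ f W| ^ r ∂μ := by
        gcongr
        exact iUnion₂_subset huW

lemma rpow_mul_measure_sUnion_highOscBalls_le (hr : 1 ≤ r) {B : Set X} (hB : B ∈ 𝓑.balls)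
    (hf : IntegrableOn f (𝓑.hull B) μ) (lam : ℝ≥0∞) :
    lam ^ r * μ (⋃₀ 𝓑.highOscBalls f r B lam)
      ≤ 2 ^ r * 𝓑.K ^ 2 * μ B * starSharp μ 𝓑 f B r ^ r := by
  set W := 𝓑.hull B
  have hW := 𝓑.hull_mem B hB
  have htW : ∀ A ∈ 𝓑.highOscBalls f r B lam, A ⊆ W := fun A hA =>
    𝓑.hull_sub B hB A hA.1 hA.2.2.1 hA.2.1
  obtain ⟨u, hut, hcount, hdisj, hcover⟩ := 𝓑.exists_countable_disjoint_measure_sUnion_le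
    (t := 𝓑.highOscBalls f r B lam) (fun A hA => hA.1)
    (ne_top_of_le_ne_top (𝓑.lt_top W hW).ne (measure_mono (sUnion_subset htW)))
  have hsum := rpow_mul_tsum_measure_le 𝓑 hr (fun b hb => (hut hb).1) hcount hdisj
    (fun b hb => htW b (hut hb)) hf (fun b hb => (hut hb).2.2.2.le)
  have hoscW : ∫⁻ x in W, ENNReal.ofReal |f x - intAvg μ f W| ^ r ∂μ
      ≤ 𝓑.K * μ B * starSharp μ 𝓑 f B r ^ r := by
    rw [lintegral_abs_sub_intAvg_rpow_eq (by positivity) (𝓑.pos W hW).ne' (𝓑.lt_top W hW).ne]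
    gcongr
    · exact 𝓑.hull_bound B hB
    · exact sharpAvg_le_starSharp 𝓑 hW (𝓑.subset_hull hB)
  calc lam ^ r * μ (⋃₀ 𝓑.highOscBalls f r B lam)
      ≤ 𝓑.K * (lam ^ r * ∑' b : u, μ b) := by
        rw [mul_left_comm]
        exact mul_le_mul_right hcover _
    _ ≤ 𝓑.K * (2 ^ r * (𝓑.K * μ B * starSharp μ 𝓑 f B r ^ r)) := by
        gcongr 𝓑.K * ?_
        exact hsum.trans (by gcongr)
    _ = 2 ^ r * 𝓑.K ^ 2 * μ B * starSharp μ 𝓑 f B r ^ r := by ring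

lemma two_mul_measure_sUnion_highOscBalls_le (hr : 1 ≤ r) {B : Set X} (hB : B ∈ 𝓑.balls)
    (hf : IntegrableOn f (𝓑.hull B) μ) {lam : ℝ≥0∞} (hlam0 : lam ≠ 0) (hlam : lam ≠ ∞)
    (hlarge : 2 ^ (r + 1) * 𝓑.K ^ 2 * starSharp μ 𝓑 f B r ^ r ≤ lam ^ r) :
    2 * μ (⋃₀ 𝓑.highOscBalls f r B lam) ≤ μ B := by
  have hr0 : 0 < r := by positivity
  refine (ENNReal.mul_le_mul_iff_right (ENNReal.rpow_pos (pos_iff_ne_zero.2 hlam0) hlam).ne'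
    (ENNReal.rpow_ne_top_of_nonneg hr0.le hlam)).1 ?_
  calc lam ^ r * (2 * μ (⋃₀ 𝓑.highOscBalls f r B lam))
      = 2 * (lam ^ r * μ (⋃₀ 𝓑.highOscBalls f r B lam)) := by ring
    _ ≤ 2 * (2 ^ r * 𝓑.K ^ 2 * μ B * starSharp μ 𝓑 f B r ^ r) := by
        gcongr 2 * ?_
        exact rpow_mul_measure_sUnion_highOscBalls_le 𝓑 hr hB hf lam
    _ = 2 ^ (r + 1) * 𝓑.K ^ 2 * starSharp μ 𝓑 f B r ^ r * μ B := by
        rw [ENNReal.rpow_add _ _ two_ne_zero ofNat_ne_top, ENNReal.rpow_one]; ring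
    _ ≤ lam ^ r * μ B := by gcongr

lemma sharpAvg_rpow_le_starSharp_of_le_two_mul (hr : 1 ≤ r)
    (hf : MemLp f (ENNReal.ofReal r) μ) {A B : Set X} (hA : A ∈ 𝓑.balls) (hB : B ∈ 𝓑.balls)
    (hAB : (A ∩ B).Nonempty) (hμ : μ B ≤ 2 * μ A) :
    sharpAvg μ f A r ^ r ≤ 2 ^ r * 𝓑.K * starSharp μ 𝓑 f B r ^ r := by
  have hW := 𝓑.hull_mem A hA
  have hBW : B ⊆ 𝓑.hull A := 𝓑.hull_sub A hA B hB hμ (inter_comm A B ▸ hAB)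
  calc sharpAvg μ f A r ^ r
      ≤ 2 ^ r * (μ (𝓑.hull A) / μ A) * sharpAvg μ f (𝓑.hull A) r ^ r :=
        sharpAvg_rpow_le_of_subset hr (𝓑.subset_hull hA) (𝓑.pos A hA).ne' (𝓑.lt_top A hA).ne
          (𝓑.lt_top _ hW).ne
          (hf.integrableOn_of_measure_ne_top (ENNReal.one_le_ofReal.2 hr) (𝓑.lt_top _ hW).ne)
    _ ≤ 2 ^ r * 𝓑.K * starSharp μ 𝓑 f B r ^ r := by
        gcongr
        · exact ENNReal.div_le_of_le_mul (𝓑.hull_bound A hA)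
        · exact sharpAvg_le_starSharp 𝓑 hW hBW

lemma Msharp_le_of_notMem_sUnion_highOscBalls (hr : 1 ≤ r)
    (hf : MemLp f (ENNReal.ofReal r) μ) {B : Set X} (hB : B ∈ 𝓑.balls) {y : X} (hyB : y ∈ B)
    {lam : ℝ≥0∞} (hy : y ∉ ⋃₀ 𝓑.highOscBalls f r B lam)
    (hlarge : 2 ^ r * 𝓑.K * starSharp μ 𝓑 f B r ^ r ≤ lam ^ r) :
    Msharp μ 𝓑 f r y ≤ lam := by
  refine iSup₂_le fun A hA => iSup_le fun hyA => ?_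
  by_cases hsmall : μ A ≤ 2 * μ B
  · exact not_lt.1 fun hlt => hy ⟨A, ⟨hA, ⟨y, hyA, hyB⟩, hsmall, hlt⟩, hyA⟩
  · have hμ : μ B ≤ 2 * μ A := calc
      μ B ≤ 2 * μ B := le_mul_of_one_le_left zero_le one_le_two
      _ ≤ μ A := (not_le.1 hsmall).le
      _ ≤ 2 * μ A := le_mul_of_one_le_left zero_le one_le_two
    exact (ENNReal.rpow_le_rpow_iff (by positivity)).1 <|
      (sharpAvg_rpow_le_starSharp_of_le_two_mul 𝓑 hr hf hA hB ⟨y, hyA, hyB⟩ hμ).trans hlarge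

lemma essInf_Msharp_le (hr : 1 ≤ r) (hf : MemLp f (ENNReal.ofReal r) μ) {B : Set X}
    (hB : B ∈ 𝓑.balls) {c : ℝ≥0∞} (hc₁ : 2 ^ r * 𝓑.K ≤ c ^ r)
    (hc₂ : 2 ^ (r + 1) * 𝓑.K ^ 2 ≤ c ^ r) :
    essInf (fun y => Msharp μ 𝓑 f r y) (μ.restrict B) ≤ c * starSharp μ 𝓑 f B r := by
  set S := starSharp μ 𝓑 f B r
  have hr0 : 0 < r := by positivity
  have hc0 : c ≠ 0 := by
    rintro rfl
    rw [ENNReal.zero_rpow_of_pos hr0, nonpos_iff_eq_zero, mul_eq_zero] at hc₁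
    exact hc₁.elim (ENNReal.rpow_pos two_pos ofNat_ne_top).ne' 𝓑.K_pos.ne'
  rcases eq_or_ne S ∞ with hS | hS
  · simp [hS, hc0]
  refine ENNReal.le_of_forall_pos_le_add fun ε hε hcS => ?_
  set lam := c * S + ε
  have hlam0 : lam ≠ 0 := ((ENNReal.coe_pos.2 hε).trans_le le_add_self).ne'
  have hlam : lam ≠ ∞ := ENNReal.add_ne_top.2 ⟨hcS.ne, ENNReal.coe_ne_top⟩
  have hlarge (a : ℝ≥0∞) (ha : a ≤ c ^ r) : a * S ^ r ≤ lam ^ r :=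
    calc a * S ^ r ≤ c ^ r * S ^ r := by gcongr
      _ = (c * S) ^ r := (ENNReal.mul_rpow_of_nonneg _ _ hr0.le).symm
      _ ≤ lam ^ r := by gcongr; exact le_self_add
  have hgood : μ (B \ ⋃₀ 𝓑.highOscBalls f r B lam) ≠ 0 :=
    measure_diff_ne_zero_of_two_mul_le (𝓑.pos B hB).ne' (𝓑.lt_top B hB).ne
      (two_mul_measure_sUnion_highOscBalls_le 𝓑 hr hB
        (hf.integrableOn_of_measure_ne_top (ENNReal.one_le_ofReal.2 hr)
          (𝓑.lt_top _ (𝓑.hull_mem B hB)).ne) hlam0 hlam (hlarge _ hc₂))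
  refine essInf_le_of_measure_setOf_le_ne_zero ?_
  rw [Measure.restrict_apply' (𝓑.meas B hB)]
  refine fun h => hgood (measure_mono_null (fun y hy => ?_) h)
  exact ⟨Msharp_le_of_notMem_sUnion_highOscBalls 𝓑 hr hf hB hy.1 hy.2 (hlarge _ hc₁), hy.1⟩

end SharpMaximal

/-- `⟨f⟩*_{#,B} ≤ essinf_B M_# f ≲ ⟨f⟩*_{#,B}` (Proposition 1). -/
theorem starSharp_comparable_essInf_Msharp
    {X : Type*} [MeasurableSpace X] (μ : Measure X) (𝓑 : BallBasis X μ)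
    (r : ℝ) (hr : 1 ≤ r) :
    ∃ C : ℝ, 0 < C ∧
      ∀ f : X → ℝ, MemLp f (ENNReal.ofReal r) μ →
        ∀ B ∈ 𝓑.balls,
          starSharp μ 𝓑 f B r ≤ essInf (fun y => Msharp μ 𝓑 f r y) (μ.restrict B) ∧
          essInf (fun y => Msharp μ 𝓑 f r y) (μ.restrict B) ≤
            ENNReal.ofReal C * starSharp μ 𝓑 f B r := by
  have hr0 : 0 < r := by positivity
  have := 𝓑.K_pos
  have := 𝓑.K_lt_top.ne
  set a : ℝ≥0∞ := 2 ^ r * 𝓑.K + 2 ^ (r + 1) * 𝓑.K ^ 2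
  have ha0 : a ≠ 0 := by positivity
  have ha : a ≠ ∞ := by finiteness
  set c : ℝ≥0∞ := a ^ (1 / r)
  have hc : c ^ r = a := by rw [← ENNReal.rpow_mul, one_div_mul_cancel hr0.ne', ENNReal.rpow_one]
  have hc_top : c ≠ ∞ := ENNReal.rpow_ne_top_of_nonneg (by positivity) ha
  refine ⟨c.toReal, ENNReal.toReal_pos (ENNReal.rpow_pos (pos_iff_ne_zero.2 ha0) ha).ne' hc_top,
    fun f hf B hB => ⟨starSharp_le_essInf_Msharp 𝓑 (𝓑.meas B hB), ?_⟩⟩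
  rw [ENNReal.ofReal_toReal hc_top]
  exact essInf_Msharp_le 𝓑 hr hf hB (hc ▸ le_self_add) (hc ▸ le_add_self)
end
end

section
/- Let B be a doubling ball-basis in a measure space (X, M, μ) and let T : L^r(X) → L^0(X) be a subadditive bounded oscillation (BO) operator with localization constant L(T) satisfying the weak-L^r inequality with norm ‖T‖_{L^r → L^{r,∞}}. Then for every f ∈ L^r(X), every ball B, and every 0 < α < 1, OSC_{B,α}(|Tf|) ≤ C (L(T) + (1−α)^{−1/r} ‖T‖_{L^r → L^{r,∞}}) · ⟨f⟩*_B, where ⟨f⟩*_B = sup_{A ⊇ B} (μ(A)⁻¹ ∫_A |f|^r)^{1/r} and C depends only on the ball-basis constants. -/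
open MeasureTheory ENNReal Set Filter

noncomputable section

variable {X : Type*} [MeasurableSpace X]

/-! The far part `f₂ = 1_{X ∖ B*} f` has oscillation at most `L ⟨f⟩*_B` on `B` by the BO property.
The near part `f₁ = 1_{B*} f` satisfies `∫ |f₁|^r ≤ μ(B*) (⟨f⟩*_B)^r ≤ K μ(B) (⟨f⟩*_B)^r`, so by the
weak-`L^r` bound `|T f₁| > λ` for `λ > ‖T‖ (K / (1 - α))^{1/r} ⟨f⟩*_B` only on a set `S` of measure
at most `(1 - α) μ(B)`. On `B ∖ S`, which has measure at least `α μ(B)`, subadditivity gives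
`|Tf x| - |Tf y| ≤ |T f₂ x - T f₂ y| + 2λ`. -/

lemma ENNReal.le_add_two_mul_of_forall_lt {x y β : ℝ≥0∞}
    (h : ∀ lam : ℝ, β < ENNReal.ofReal lam → x ≤ y + 2 * ENNReal.ofReal lam) :
    x ≤ y + 2 * β := by
  refine ENNReal.le_of_forall_pos_le_add fun ε hε hfin => ?_
  have hβ : β ≠ ∞ := by
    rintro rfl
    simp at hfin
  have hε2 : ENNReal.ofReal ((ε : ℝ) / 2) = (ε : ℝ≥0∞) / 2 := by
    rw [ENNReal.ofReal_div_of_pos two_pos, ofReal_coe_nnreal, ENNReal.ofReal_ofNat]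
  have hlam : ENNReal.ofReal (β.toReal + ε / 2) = β + ε / 2 := by
    rw [ENNReal.ofReal_add toReal_nonneg (by positivity), ofReal_toReal hβ, hε2]
  calc x ≤ y + 2 * ENNReal.ofReal (β.toReal + ε / 2) :=
        h _ (hlam ▸ ENNReal.lt_add_right hβ (by simpa using hε.ne'))
    _ = y + 2 * β + ε := by
        rw [hlam, mul_add, ENNReal.mul_div_cancel two_ne_zero ofNat_ne_top, add_assoc]

section Oscillation

variable {Y : Type*}

lemma osc_mono {f : Y → ℝ} {E F : Set Y} (h : E ⊆ F) : osc f E ≤ osc f F :=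
  iSup₂_mono' fun x hx => ⟨x, h hx, iSup₂_mono' fun y hy => ⟨y, h hy, le_rfl⟩⟩

lemma ofReal_abs_sub_le_osc (f : Y → ℝ) {E : Set Y} {x y : Y} (hx : x ∈ E) (hy : y ∈ E) :
    ENNReal.ofReal |f x - f y| ≤ osc f E := by
  have hle : ∀ x ∈ E, ∀ y ∈ E, ENNReal.ofReal (f x - f y) ≤ osc f E := fun x hx y hy => by
    unfold osc
    exact le_iSup₂_of_le x hx (le_iSup₂_of_le y hy le_rfl)
  rw [abs_eq_max_neg, ENNReal.ofReal_max, neg_sub]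
  exact max_le (hle x hx y hy) (hle y hy x hx)

namespace SubadditiveOp

variable {T : (Y → ℝ) → (Y → ℝ)}

lemma abs_sub_abs_le (hT : SubadditiveOp T) (g h : Y → ℝ) (x y : Y) :
    |T (g + h) x| - |T (g + h) y| ≤ |T h x - T h y| + |T g x| + |T g y| := by
  have hx : |T (g + h) x| ≤ |T g x| + |T h x| := hT.2 g h x
  have hy : |T h y| ≤ |T (g + h) y| + |T g y| := by
    have := hT.2 (g + h) ((-1 : ℝ) • g) y
    rwa [hT.1, show g + h + (-1 : ℝ) • g = h by rw [neg_one_smul]; abel, abs_neg, abs_one,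
      one_mul] at this
  linarith [abs_sub_abs_le_abs_sub (T h x) (T h y)]

lemma osc_abs_add_le (hT : SubadditiveOp T) {g h : Y → ℝ} {E : Set Y} {lam : ℝ}
    (hg : ∀ x ∈ E, |T g x| ≤ lam) :
    osc (fun x => |T (g + h) x|) E ≤ osc (T h) E + 2 * ENNReal.ofReal lam := by
  refine iSup₂_le fun x hx => iSup₂_le fun y hy => ?_
  have hlam : 0 ≤ lam := (abs_nonneg _).trans (hg x hx)
  calc ENNReal.ofReal (|T (g + h) x| - |T (g + h) y|)
      ≤ ENNReal.ofReal (|T h x - T h y| + 2 * lam) := by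
        gcongr
        linarith [hT.abs_sub_abs_le g h x y, hg x hx, hg y hy]
    _ = ENNReal.ofReal |T h x - T h y| + 2 * ENNReal.ofReal lam := by
        rw [ENNReal.ofReal_add (abs_nonneg _) (by positivity), ENNReal.ofReal_mul zero_le_two,
          ENNReal.ofReal_ofNat]
    _ ≤ osc (T h) E + 2 * ENNReal.ofReal lam := by
        gcongr
        exact ofReal_abs_sub_le_osc _ hx hy

end SubadditiveOp

end Oscillation

lemma OSCa_le_osc_diff {μ : Measure X} {F : X → ℝ} {B S : Set X} {α : ℝ}
    (hB : MeasurableSet B) (hBfin : μ B ≠ ∞) (hα : α ≤ 1)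
    (hS : μ S ≤ ENNReal.ofReal (1 - α) * μ B) :
    OSCa μ F B α ≤ osc F (B \ S) := by
  set E := B \ toMeasurable μ S
  have hE : ENNReal.ofReal α * μ B ≤ μ E :=
    calc ENNReal.ofReal α * μ B = μ B - ENNReal.ofReal (1 - α) * μ B := by
          have h1 : ENNReal.ofReal α = 1 - ENNReal.ofReal (1 - α) := by
            rw [← ENNReal.ofReal_one, ← ENNReal.ofReal_sub _ (sub_nonneg.mpr hα),
              sub_sub_cancel (1 : ℝ) α]
          rw [h1, ENNReal.sub_mul fun _ _ => hBfin, one_mul]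
      _ ≤ μ B - μ (toMeasurable μ S) := by rw [measure_toMeasurable]; exact tsub_le_tsub_left hS _
      _ ≤ μ E := le_measure_sdiff
  calc OSCa μ F B α ≤ osc F E :=
        iInf_le_of_le E <| iInf_le_of_le (hB.diff (measurableSet_toMeasurable μ S)) <|
          iInf_le_of_le sdiff_subset <| iInf_le_of_le hE le_rfl
    _ ≤ osc F (B \ S) := osc_mono (sdiff_subset_sdiff_right (subset_toMeasurable μ S))

lemma lintegral_rpow_indicator {μ : Measure X} {f : X → ℝ} {A : Set X} (hA : MeasurableSet A)
    {r : ℝ} (hr : 0 < r) :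
    ∫⁻ x, ENNReal.ofReal |A.indicator f x| ^ r ∂μ = ∫⁻ x in A, ENNReal.ofReal |f x| ^ r ∂μ := by
  rw [← lintegral_indicator hA]
  congr 1
  funext x
  by_cases hx : x ∈ A <;> simp [hx, ENNReal.zero_rpow_of_pos hr]

lemma WeakType.measure_lt_abs_le {μ : Measure X} {r : ℝ} {T : (X → ℝ) → (X → ℝ)} {N : ℝ≥0∞}
    (hT : WeakType μ r T N) (hr : 0 < r) {g : X → ℝ} (hg : MemLp g (ENNReal.ofReal r) μ)
    {V b : ℝ≥0∞} (hgV : ∫⁻ x, ENNReal.ofReal |g x| ^ r ∂μ ≤ V * b ^ r) {lam : ℝ} (hlam : 0 < lam)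
    (hNb : N * b ≤ ENNReal.ofReal lam) :
    μ {x | lam < |T g x|} ≤ V :=
  calc μ {x | lam < |T g x|} ≤ (N / ENNReal.ofReal lam) ^ r * (V * b ^ r) :=
        (hT g hg lam hlam).trans (by gcongr)
    _ = (N * b / ENNReal.ofReal lam) ^ r * V := by
        rw [ENNReal.mul_div_right_comm, ENNReal.mul_rpow_of_nonneg _ _ hr.le]
        ring
    _ ≤ 1 ^ r * V := by
        gcongr
        exact ENNReal.div_le_of_le_mul (by rwa [one_mul])
    _ = V := by rw [ENNReal.one_rpow, one_mul]

section BallBasis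

variable {μ : Measure X} {𝓑 : BallBasis X μ}

lemma BallBasis.subset_hull_s13 {B : Set X} (hB : B ∈ 𝓑.balls) : B ⊆ 𝓑.hull B :=
  𝓑.hull_sub B hB B hB (le_mul_of_one_le_left' one_le_two)
    (by rw [inter_self]; exact nonempty_of_measure_ne_zero (𝓑.pos B hB).ne')

lemma setLIntegral_rpow_le_measure_mul_starAvg_rpow {f : X → ℝ} {A B : Set X} {r : ℝ}
    (hr : 0 < r) (hA : A ∈ 𝓑.balls) (hBA : B ⊆ A) :
    ∫⁻ x in A, ENNReal.ofReal |f x| ^ r ∂μ ≤ μ A * starAvg μ 𝓑 f B r ^ r := by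
  have havg : avgPow μ f A r ≤ starAvg μ 𝓑 f B r :=
    le_iSup₂_of_le A hA (le_iSup_of_le hBA le_rfl)
  calc ∫⁻ x in A, ENNReal.ofReal |f x| ^ r ∂μ
      = μ A * ((μ A)⁻¹ * ∫⁻ x in A, ENNReal.ofReal |f x| ^ r ∂μ) := by
        rw [← mul_assoc, ENNReal.mul_inv_cancel (𝓑.pos A hA).ne' (𝓑.lt_top A hA).ne, one_mul]
    _ = μ A * avgPow μ f A r ^ r := by
        rw [avgPow, ← ENNReal.rpow_mul, one_div_mul_cancel hr.ne', ENNReal.rpow_one]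
    _ ≤ μ A * starAvg μ 𝓑 f B r ^ r := by gcongr

variable {r : ℝ} {T : (X → ℝ) → (X → ℝ)} {L N : ℝ≥0∞} {f : X → ℝ} {B : Set X} {α : ℝ}

lemma OSCa_abs_le_of_measure_lt_le (hT : SubadditiveOp T) (hBO : HasBOconst μ 𝓑 r T L)
    (hf : MemLp f (ENNReal.ofReal r) μ) (hB : B ∈ 𝓑.balls) (hα : α ≤ 1) {lam : ℝ}
    (hlam : μ {x | lam < |T ((𝓑.hull B).indicator f) x|} ≤ ENNReal.ofReal (1 - α) * μ B) :
    OSCa μ (fun x => |T f x|) B α ≤ L * starAvg μ 𝓑 f B r + 2 * ENNReal.ofReal lam := by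
  set S := {x | lam < |T ((𝓑.hull B).indicator f) x|}
  have hnear := hT.osc_abs_add_le (h := (𝓑.hull B)ᶜ.indicator f) (E := B \ S)
    fun x hx => not_lt.mp hx.2
  rw [indicator_self_add_compl] at hnear
  calc OSCa μ (fun x => |T f x|) B α ≤ osc (fun x => |T f x|) (B \ S) :=
        OSCa_le_osc_diff (𝓑.meas B hB) (𝓑.lt_top B hB).ne hα hlam
    _ ≤ osc (T ((𝓑.hull B)ᶜ.indicator f)) B + 2 * ENNReal.ofReal lam :=
        hnear.trans (add_le_add_left (osc_mono sdiff_subset) _)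
    _ ≤ L * starAvg μ 𝓑 f B r + 2 * ENNReal.ofReal lam :=
        add_le_add_left (hBO f hf B hB) _

lemma OSCa_abs_le (hT : SubadditiveOp T) (hBO : HasBOconst μ 𝓑 r T L) (hWT : WeakType μ r T N)
    (hr : 0 < r) (hf : MemLp f (ENNReal.ofReal r) μ) (hB : B ∈ 𝓑.balls) (hα : α < 1) :
    OSCa μ (fun x => |T f x|) B α ≤ L * starAvg μ 𝓑 f B r +
      2 * (N * (𝓑.K ^ (1 / r) * (ENNReal.ofReal (1 - α))⁻¹ ^ (1 / r) * starAvg μ 𝓑 f B r)) := by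
  set a := starAvg μ 𝓑 f B r
  set t := ENNReal.ofReal (1 - α)
  have ht : t ≠ 0 := by simpa [t] using hα
  have hH := 𝓑.hull_mem B hB
  have hmass : ∫⁻ x, ENNReal.ofReal |(𝓑.hull B).indicator f x| ^ r ∂μ ≤
      t * μ B * (𝓑.K ^ (1 / r) * t⁻¹ ^ (1 / r) * a) ^ r :=
    calc ∫⁻ x, ENNReal.ofReal |(𝓑.hull B).indicator f x| ^ r ∂μ
        = ∫⁻ x in 𝓑.hull B, ENNReal.ofReal |f x| ^ r ∂μ := lintegral_rpow_indicator (𝓑.meas _ hH) hr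
      _ ≤ μ (𝓑.hull B) * a ^ r := setLIntegral_rpow_le_measure_mul_starAvg_rpow hr hH
          (BallBasis.subset_hull_s13 hB)
      _ ≤ 𝓑.K * μ B * a ^ r := by gcongr; exact 𝓑.hull_bound B hB
      _ = (t * t⁻¹) * (𝓑.K * μ B * a ^ r) := by
          rw [ENNReal.mul_inv_cancel ht ofReal_ne_top, one_mul]
      _ = t * μ B * (𝓑.K ^ (1 / r) * t⁻¹ ^ (1 / r) * a) ^ r := by
          rw [ENNReal.mul_rpow_of_nonneg _ _ hr.le, ENNReal.mul_rpow_of_nonneg _ _ hr.le,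
            ← ENNReal.rpow_mul, ← ENNReal.rpow_mul, one_div_mul_cancel hr.ne', ENNReal.rpow_one,
            ENNReal.rpow_one]
          ring
  refine ENNReal.le_add_two_mul_of_forall_lt fun lam hlam =>
    OSCa_abs_le_of_measure_lt_le hT hBO hf hB hα.le ?_
  exact hWT.measure_lt_abs_le hr (hf.indicator (𝓑.meas _ hH)) hmass
    (ENNReal.ofReal_pos.mp (zero_le.trans_lt hlam)) hlam.le

end BallBasis

theorem osc_BO_operator_general
    {X : Type*} [MeasurableSpace X] (μ : Measure X) (𝓑 : BallBasis X μ)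
    (r : ℝ) (hr : 1 ≤ r) :
    ∃ C : ℝ, 0 < C ∧
      ∀ (T : (X → ℝ) → (X → ℝ)) (L N : ℝ≥0∞),
        SubadditiveOp T → HasBOconst μ 𝓑 r T L → WeakType μ r T N →
        ∀ f : X → ℝ, MemLp f (ENNReal.ofReal r) μ →
          ∀ B ∈ 𝓑.balls, ∀ α : ℝ, 0 < α → α < 1 →
            OSCa μ (fun x => |T f x|) B α ≤
              ENNReal.ofReal C * (L + ENNReal.ofReal ((1 - α) ^ (-(1 / r))) * N) *
                starAvg μ 𝓑 f B r := by
  have hr0 : 0 < r := one_pos.trans_le hr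
  refine ⟨2 * (𝓑.K.toReal + 1), by positivity, fun T L N hT hBO hWT f hf B hB α hα0 hα1 => ?_⟩
  set a := starAvg μ 𝓑 f B r
  set c := ENNReal.ofReal ((1 - α) ^ (-(1 / r)))
  have hc : (ENNReal.ofReal (1 - α))⁻¹ ^ (1 / r) = c := by
    rw [ENNReal.inv_rpow, ← ENNReal.rpow_neg, ENNReal.ofReal_rpow_of_pos (by linarith)]
  have hC : ENNReal.ofReal (2 * (𝓑.K.toReal + 1)) = 2 * (𝓑.K + 1) := by
    rw [ENNReal.ofReal_mul zero_le_two, ENNReal.ofReal_add toReal_nonneg zero_le_one,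
      ofReal_toReal 𝓑.K_lt_top.ne, ENNReal.ofReal_one, ENNReal.ofReal_ofNat]
  have hK : 𝓑.K ^ (1 / r) ≤ 𝓑.K + 1 :=
    calc 𝓑.K ^ (1 / r) ≤ (𝓑.K + 1) ^ (1 / r) := by gcongr; exact le_self_add
      _ ≤ (𝓑.K + 1) ^ (1 : ℝ) :=
          ENNReal.rpow_le_rpow_of_exponent_le le_add_self ((div_le_one hr0).mpr hr)
      _ = 𝓑.K + 1 := ENNReal.rpow_one _
  calc OSCa μ (fun x => |T f x|) B α ≤ L * a + 2 * (N * (𝓑.K ^ (1 / r) * c * a)) :=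
        hc ▸ OSCa_abs_le hT hBO hWT hr0 hf hB hα1
    _ ≤ 2 * (𝓑.K + 1) * (L * a) + 2 * (N * ((𝓑.K + 1) * c * a)) := by
        have h2K : 1 ≤ 2 * (𝓑.K + 1) := one_le_two.trans (le_mul_of_one_le_right' le_add_self)
        exact add_le_add (le_mul_of_one_le_left' h2K) (by gcongr)
    _ = ENNReal.ofReal (2 * (𝓑.K.toReal + 1)) * (L + c * N) * a := by
        rw [hC]
        ring

/-- oscillation bound for BO operators:
`OSC_{B,α}(|Tf|) ≤ C (L(T) + (1−α)^{−1/r} ‖T‖) ⟨f⟩*_B`. -/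
theorem osc_BO_operator
    {X : Type*} [MeasurableSpace X] (μ : Measure X) (𝓑 : BallBasis X μ)
    (η : ℝ≥0∞) (hd : 𝓑.Doubling η) (r : ℝ) (hr : 1 ≤ r) :
    ∃ C : ℝ, 0 < C ∧
      ∀ (T : (X → ℝ) → (X → ℝ)) (L N : ℝ≥0∞),
        SubadditiveOp T → HasBOconst μ 𝓑 r T L → WeakType μ r T N →
        ∀ f : X → ℝ, MemLp f (ENNReal.ofReal r) μ →
          ∀ B ∈ 𝓑.balls, ∀ α : ℝ, 0 < α → α < 1 →
            OSCa μ (fun x => |T f x|) B α ≤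
              ENNReal.ofReal C * (L + ENNReal.ofReal ((1 - α) ^ (-(1 / r))) * N) *
                starAvg μ 𝓑 f B r :=
  osc_BO_operator_general μ 𝓑 r hr
end
end
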